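/- For every natural number n, one has f̄ (2n+1) = w₁ · (f̄ n)² in P. (Facts 4.7(b).) -/
import Mathlib


/- Context: `P = 𝔽₂[w₁,w₂]`, `f̄ 0 = 1`, `f̄ 1 = w₁`,
`f̄ (n+2) = w₁·f̄(n+1) + w₂·f̄ n`, and `J̄ n = ⟨f̄ (n+1), w₂·f̄ n⟩`. -/

noncomputable section

open MvPolynomial

abbrev P2 : Type := MvPolynomial (Fin 2) (ZMod 2)

def w₁ : P2 := X 0
def w₂ : P2 := X 1

def fbar : ℕ → P2
  | 0 => 1
  | 1 => w₁
  | n + 2 => w₁ * fbar (n + 1) + w₂ * fbar n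

def Jbar (n : ℕ) : Ideal P2 := Ideal.span {fbar (n + 1), w₂ * fbar n}


lemma two_eq_zero_P2 : (2 : P2) = 0 := by
  have := CharP.cast_eq_zero P2 2
  simpa using this

lemma fbar_both (n : ℕ) :
    fbar (2 * n + 1) = w₁ * fbar n ^ 2 ∧
    fbar (2 * n + 2) = fbar (n + 1) ^ 2 + w₂ * fbar n ^ 2 := by
  induction n with
  | zero =>
      constructor
      · simp [fbar]
      · show fbar 2 = _
        simp only [fbar]
        ring
  | succ n ih =>
      obtain ⟨h1, h2⟩ := ih
      have e1 : 2 * (n + 1) + 1 = (2 * n + 1) + 2 := by ring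
      have e2 : 2 * (n + 1) + 2 = (2 * n + 2) + 2 := by ring
      constructor
      · rw [e1]
        show w₁ * fbar (2 * n + 2) + w₂ * fbar (2 * n + 1) = _
        rw [h1, h2]
        linear_combination (w₁ * w₂ * fbar n ^ 2) * two_eq_zero_P2
      · rw [e2]
        show w₁ * fbar (2 * n + 3) + w₂ * fbar (2 * n + 2) = _
        have e3 : 2 * n + 3 = (2 * n + 1) + 2 := by ring
        rw [e3]
        show w₁ * (w₁ * fbar (2 * n + 2) + w₂ * fbar (2 * n + 1)) + _ = _
        rw [h1, h2]
        show _ = (w₁ * fbar (n + 1) + w₂ * fbar n) ^ 2 + w₂ * fbar (n + 1) ^ 2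
        linear_combination (-(w₁ * w₂ * fbar n * fbar (n+1)) + w₁ ^ 2 * w₂ * fbar n ^ 2) * two_eq_zero_P2

/- Statement 5 (Facts 4.7(b)): `f̄ (2n+1) = w₁ · (f̄ n)²`. -/
theorem fbar_odd_square (n : ℕ) : fbar (2 * n + 1) = w₁ * (fbar n) ^ 2 := by
  exact (fbar_both n).1

end
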